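/- arXiv:1209.1695 — 3 statements merged into one kernel-verified Lean document; each statement's English description precedes it below -/
import Mathlib

section
/- In the static two-controller team problem, for every pair of control strategies (g¹,g²) with gⁱ : 𝒴* × 𝒴ⁱ → 𝒰ⁱ, there exists a coordination strategy d : 𝒴* → F(𝒴¹,𝒰¹) × F(𝒴²,𝒰²) such that the expected cost E[l(X, U¹, U²)] under the coordinated system (where Uⁱ = (d(Y*))ⁱ(Yⁱ)) equals the expected cost under (g¹,g²) (where Uⁱ = gⁱ(Y*,Yⁱ)); and conversely, for every coordination strategy d there exist (g¹,g²) achieving the same expected cost. Consequently the infimum of expected cost over control strategy pairs equals the infimum over coordination strategies. -/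
theorem static_team_coordinator_equivalence_general
    (X Ys Y1 Y2 U1 U2 : Type)
    [Fintype X] [Fintype Ys] [Fintype Y1] [Fintype Y2]
    (q : X × Ys × Y1 × Y2 → ℝ)
    (l : X → U1 → U2 → ℝ)
    (Jg : ((Ys → Y1 → U1) × (Ys → Y2 → U2)) → ℝ)
    (hJg : ∀ g, Jg g = ∑ v : X × Ys × Y1 × Y2,
      q v * l v.1 (g.1 v.2.1 v.2.2.1) (g.2 v.2.1 v.2.2.2))
    (Jd : (Ys → (Y1 → U1) × (Y2 → U2)) → ℝ)
    (hJd : ∀ d, Jd d = ∑ v : X × Ys × Y1 × Y2,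
      q v * l v.1 ((d v.2.1).1 v.2.2.1) ((d v.2.1).2 v.2.2.2)) :
    (∀ g, ∃ d, Jd d = Jg g) ∧ (∀ d, ∃ g, Jg g = Jd d) ∧
      (⨅ g : (Ys → Y1 → U1) × (Ys → Y2 → U2), Jg g) =
        ⨅ d : Ys → (Y1 → U1) × (Y2 → U2), Jd d := by
  let prescription := (Equiv.arrowProdEquivProdArrow Ys (fun _ ↦ Y1 → U1) (fun _ ↦ Y2 → U2)).symm
  have hcost : ∀ g, Jd (prescription g) = Jg g := fun g ↦ by rw [hJd, hJg]; rfl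
  refine ⟨fun g ↦ ⟨prescription g, hcost g⟩, fun d ↦ ⟨prescription.symm d, ?_⟩,
    prescription.iInf_congr hcost⟩
  rw [← hcost, prescription.apply_symm_apply]

/-- In the static two-controller team problem, control strategies and
coordination strategies are cost-equivalent, and the infima of expected cost coincide. -/
theorem static_team_coordinator_equivalence
    (X Ys Y1 Y2 U1 U2 : Type)
    [Fintype X] [Fintype Ys] [Fintype Y1] [Fintype Y2] [Fintype U1] [Fintype U2]
    [Nonempty U1] [Nonempty U2]
    (q : X × Ys × Y1 × Y2 → ℝ) (hq : ∀ v, 0 ≤ q v) (hq1 : ∑ v, q v = 1)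
    (l : X → U1 → U2 → ℝ)
    (Jg : ((Ys → Y1 → U1) × (Ys → Y2 → U2)) → ℝ)
    (hJg : ∀ g, Jg g = ∑ v : X × Ys × Y1 × Y2,
      q v * l v.1 (g.1 v.2.1 v.2.2.1) (g.2 v.2.1 v.2.2.2))
    (Jd : (Ys → (Y1 → U1) × (Y2 → U2)) → ℝ)
    (hJd : ∀ d, Jd d = ∑ v : X × Ys × Y1 × Y2,
      q v * l v.1 ((d v.2.1).1 v.2.2.1) ((d v.2.1).2 v.2.2.2)) :
    (∀ g, ∃ d, Jd d = Jg g) ∧ (∀ d, ∃ g, Jg g = Jd d) ∧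
      (⨅ g : (Ys → Y1 → U1) × (Ys → Y2 → U2), Jg g) =
        ⨅ d : Ys → (Y1 → U1) × (Y2 → U2), Jd d :=
  static_team_coordinator_equivalence_general X Ys Y1 Y2 U1 U2 q l Jg hJg Jd hJd
end

section
/- In the partial history sharing model, control strategies and coordination strategies are equivalent: (a) given any control strategy 𝐠 = (gᵢₜ) with Uᵢₜ = gᵢₜ(Yᵢₜ, Mᵢₜ, Cₜ), the coordination strategy defined by dₜ(Cₜ) = (g¹ₜ(·,·,Cₜ), …, gⁿₜ(·,·,Cₜ)) induces the same joint distribution of (X_{1:T}, 𝐔_{1:T}) and hence the same expected total cost; (b) conversely, given any coordination strategy 𝐝 with 𝚪ₜ = dₜ(Cₜ, 𝚪_{1:t-1}), the control strategy obtained by recursively substituting past prescriptions (so that gᵢₜ(·,·,cₜ) = dᵢₜ(cₜ, γ_{1:t-1}(cₜ)) where γ_{1:t-1}(cₜ) are the prescriptions determined by 𝐝 and the prefix of cₜ) induces the same joint distribution of (X_{1:T}, 𝐔_{1:T}) and the same expected total cost. -/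
open Finset

open Classical in
/-- Probability of an event under a pmf on a finite sample space. -/
noncomputable def prOf {Ω : Type} [Fintype Ω] (p : Ω → ℝ) (A : Ω → Prop) : ℝ :=
  ∑ ω, if A ω then p ω else 0

/-- The partial history sharing model: dynamics, observations, memory-update and
shared-memory (protocol) functions, initial memories, and instantaneous cost. -/
structure PHSModel (n : ℕ) where
  𝒳 : Type
  𝒲0 : Type
  𝒴 : Fin n → Type
  𝒰 : Fin n → Type
  ℳ : Fin n → Type
  𝒵 : Fin n → Type
  𝒲 : Fin n → Type
  f : ℕ → 𝒳 → (∀ i, 𝒰 i) → 𝒲0 → 𝒳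
  h : (i : Fin n) → ℕ → 𝒳 → 𝒲 i → 𝒴 i
  phi : (i : Fin n) → ℕ → ℳ i → 𝒴 i → 𝒰 i → 𝒵 i
  lam : (i : Fin n) → ℕ → ℳ i → 𝒴 i → 𝒰 i → ℳ i
  m0 : ∀ i, ℳ i
  l : ℕ → 𝒳 → (∀ i, 𝒰 i) → ℝ

namespace PHSModel

variable {n : ℕ} (M : PHSModel n)

/-- A control strategy: controller i maps (current observation, local memory,
shared memory) to its action. -/
abbrev Ctrl := (i : Fin n) → (t : ℕ) → M.𝒴 i → M.ℳ i → (Fin t → ∀ j, M.𝒵 j) → M.𝒰 i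

/-- A prescription tuple: for each controller a map from (observation, local memory)
to action. -/
abbrev Pres := ∀ i, M.𝒴 i → M.ℳ i → M.𝒰 i

/-- A coordination strategy: maps (shared memory, past prescriptions) to current
prescriptions. -/
abbrev Coord := (t : ℕ) → (Fin t → ∀ j, M.𝒵 j) → (Fin t → M.Pres) → M.Pres

/-- A realization of the primitive random variables. -/
abbrev Prim := M.𝒳 × (ℕ → M.𝒲0) × ((i : Fin n) → ℕ → M.𝒲 i)

/-- Trajectory (state, local memories, shared memory) under a control strategy. -/
def traj (g : M.Ctrl) (ρ : M.Prim) : (t : ℕ) → M.𝒳 × (∀ i, M.ℳ i) × (Fin t → ∀ j, M.𝒵 j)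
  | 0 => (ρ.1, M.m0, fun i => i.elim0)
  | t + 1 =>
    let s : M.𝒳 × (∀ i, M.ℳ i) × (Fin t → ∀ j, M.𝒵 j) := traj g ρ t
    let y : ∀ i, M.𝒴 i := fun i => M.h i t s.1 (ρ.2.2 i t)
    let u : ∀ i, M.𝒰 i := fun i => g i t (y i) (s.2.1 i) s.2.2
    let z : ∀ j, M.𝒵 j := fun i => M.phi i t (s.2.1 i) (y i) (u i)
    (M.f t s.1 u (ρ.2.1 t), fun i => M.lam i t (s.2.1 i) (y i) (u i), Fin.snoc s.2.2 z)

def Xg (g : M.Ctrl) (ρ : M.Prim) (t : ℕ) : M.𝒳 := (M.traj g ρ t).1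
def Mg (g : M.Ctrl) (ρ : M.Prim) (t : ℕ) : ∀ i, M.ℳ i := (M.traj g ρ t).2.1
def Cg (g : M.Ctrl) (ρ : M.Prim) (t : ℕ) : Fin t → ∀ j, M.𝒵 j := (M.traj g ρ t).2.2
def Yg (g : M.Ctrl) (ρ : M.Prim) (t : ℕ) : ∀ i, M.𝒴 i :=
  fun i => M.h i t (M.Xg g ρ t) (ρ.2.2 i t)
def Ug (g : M.Ctrl) (ρ : M.Prim) (t : ℕ) : ∀ i, M.𝒰 i :=
  fun i => g i t (M.Yg g ρ t i) (M.Mg g ρ t i) (M.Cg g ρ t)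

/-- Trajectory (state, local memories, shared memory, prescription history) in the
coordinated system under a coordination strategy. -/
def ctraj (dc : M.Coord) (ρ : M.Prim) :
    (t : ℕ) → M.𝒳 × (∀ i, M.ℳ i) × (Fin t → ∀ j, M.𝒵 j) × (Fin t → M.Pres)
  | 0 => (ρ.1, M.m0, fun i => i.elim0, fun i => i.elim0)
  | t + 1 =>
    let s : M.𝒳 × (∀ i, M.ℳ i) × (Fin t → ∀ j, M.𝒵 j) × (Fin t → M.Pres) :=
      ctraj dc ρ t
    let γ : M.Pres := dc t s.2.2.1 s.2.2.2
    let y : ∀ i, M.𝒴 i := fun i => M.h i t s.1 (ρ.2.2 i t)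
    let u : ∀ i, M.𝒰 i := fun i => γ i (y i) (s.2.1 i)
    let z : ∀ j, M.𝒵 j := fun i => M.phi i t (s.2.1 i) (y i) (u i)
    (M.f t s.1 u (ρ.2.1 t), fun i => M.lam i t (s.2.1 i) (y i) (u i),
      Fin.snoc s.2.2.1 z, Fin.snoc s.2.2.2 γ)

def cX (dc : M.Coord) (ρ : M.Prim) (t : ℕ) : M.𝒳 := (M.ctraj dc ρ t).1
def cM (dc : M.Coord) (ρ : M.Prim) (t : ℕ) : ∀ i, M.ℳ i := (M.ctraj dc ρ t).2.1
def cGam (dc : M.Coord) (ρ : M.Prim) (t : ℕ) : M.Pres :=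
  dc t (M.ctraj dc ρ t).2.2.1 (M.ctraj dc ρ t).2.2.2
def cY (dc : M.Coord) (ρ : M.Prim) (t : ℕ) : ∀ i, M.𝒴 i :=
  fun i => M.h i t (M.cX dc ρ t) (ρ.2.2 i t)
def cU (dc : M.Coord) (ρ : M.Prim) (t : ℕ) : ∀ i, M.𝒰 i :=
  fun i => M.cGam dc ρ t i (M.cY dc ρ t i) (M.cM dc ρ t i)

end PHSModel

/-!
A coordination strategy is turned into a control strategy by letting each controller
replay the coordinator: since the shared memory is nested in time, the whole past
prescription history is a function of the current shared memory. Both systems are then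
driven by the same primitive variables through the same recursion, so they produce the
same state and action paths realization by realization. A control strategy g is recovered
from the coordinator that reads its prescriptions g(·, ·, c) off the shared memory c
alone, so part (a) is the special case of part (b) for that coordinator.
-/

namespace PHSModel

variable {n : ℕ} (M : PHSModel n)

def presHistory (dc : M.Coord) : (t : ℕ) → (Fin t → ∀ j, M.𝒵 j) → Fin t → M.Pres
  | 0, _ => Fin.elim0
  | t + 1, c =>
    Fin.snoc (presHistory dc t (Fin.init c)) (dc t (Fin.init c) (presHistory dc t (Fin.init c)))

def ctrlOfCoord (dc : M.Coord) : M.Ctrl :=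
  fun i t y m c => dc t c (M.presHistory dc t c) i y m

def coordOfCtrl (g : M.Ctrl) : M.Coord :=
  fun t c _ i y m => g i t y m c

theorem ctraj_eq_traj_ctrlOfCoord (dc : M.Coord) (ρ : M.Prim) (t : ℕ) :
    M.ctraj dc ρ t =
      ((M.traj (M.ctrlOfCoord dc) ρ t).1, (M.traj (M.ctrlOfCoord dc) ρ t).2.1,
        (M.traj (M.ctrlOfCoord dc) ρ t).2.2,
        M.presHistory dc t (M.traj (M.ctrlOfCoord dc) ρ t).2.2) := by
  induction t with
  | zero => exact Prod.ext rfl (Prod.ext rfl (Prod.ext rfl (funext fun i => i.elim0)))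
  | succ t ih =>
    rw [ctraj, ih]
    simp only [traj, presHistory, ctrlOfCoord, Fin.init_snoc]

theorem Xg_ctrlOfCoord (dc : M.Coord) : M.Xg (M.ctrlOfCoord dc) = M.cX dc := by
  funext ρ t
  simp only [Xg, cX, ctraj_eq_traj_ctrlOfCoord]

theorem Ug_ctrlOfCoord (dc : M.Coord) : M.Ug (M.ctrlOfCoord dc) = M.cU dc := by
  funext ρ t i
  simp only [Ug, Yg, Xg, Mg, Cg, cU, cGam, cY, cX, cM, ctrlOfCoord, ctraj_eq_traj_ctrlOfCoord]

theorem cX_coordOfCtrl (g : M.Ctrl) : M.cX (M.coordOfCtrl g) = M.Xg g :=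
  (M.Xg_ctrlOfCoord (M.coordOfCtrl g)).symm

theorem cU_coordOfCtrl (g : M.Ctrl) : M.cU (M.coordOfCtrl g) = M.Ug g :=
  (M.Ug_ctrlOfCoord (M.coordOfCtrl g)).symm

end PHSModel

theorem phs_coordinator_equivalence_general
    (n : ℕ) (M : PHSModel n) (T : ℕ)
    (Ω : Type) [Fintype Ω] (p : Ω → ℝ)
    (prim : Ω → M.Prim)
    (J : M.Ctrl → ℝ)
    (hJ : ∀ g, J g = ∑ ω, p ω * ∑ t : Fin T,
      M.l t (M.Xg g (prim ω) t) (M.Ug g (prim ω) t))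
    (Jc : M.Coord → ℝ)
    (hJc : ∀ dc, Jc dc = ∑ ω, p ω * ∑ t : Fin T,
      M.l t (M.cX dc (prim ω) t) (M.cU dc (prim ω) t)) :
    (∀ g : M.Ctrl, ∃ dc : M.Coord,
      (∀ (xv : Fin T → M.𝒳) (uv : (t : Fin T) → ∀ i, M.𝒰 i),
        prOf p (fun ω => ∀ t : Fin T,
            M.cX dc (prim ω) t = xv t ∧ M.cU dc (prim ω) t = uv t) =
          prOf p (fun ω => ∀ t : Fin T,
            M.Xg g (prim ω) t = xv t ∧ M.Ug g (prim ω) t = uv t)) ∧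
        Jc dc = J g) ∧
    (∀ dc : M.Coord, ∃ g : M.Ctrl,
      (∀ (xv : Fin T → M.𝒳) (uv : (t : Fin T) → ∀ i, M.𝒰 i),
        prOf p (fun ω => ∀ t : Fin T,
            M.Xg g (prim ω) t = xv t ∧ M.Ug g (prim ω) t = uv t) =
          prOf p (fun ω => ∀ t : Fin T,
            M.cX dc (prim ω) t = xv t ∧ M.cU dc (prim ω) t = uv t)) ∧
        J g = Jc dc) := by
  refine ⟨fun g => ⟨M.coordOfCtrl g, ?_⟩, fun dc => ⟨M.ctrlOfCoord dc, ?_⟩⟩ <;>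
    simp only [hJ, hJc, M.cX_coordOfCtrl, M.cU_coordOfCtrl, M.Xg_ctrlOfCoord, M.Ug_ctrlOfCoord,
      implies_true, and_self]

/-- Proposition 3: control strategies of the partial history sharing
model and coordination strategies of the coordinated system are equivalent: each
induces the same joint distribution of (X_{1:T}, 𝐔_{1:T}) and the same expected total
cost as some strategy of the other kind. -/
theorem phs_coordinator_equivalence
    (n : ℕ) (M : PHSModel n) (T : ℕ)
    (Ω : Type) [Fintype Ω] (p : Ω → ℝ) (hp : ∀ ω, 0 ≤ p ω) (hp1 : ∑ ω, p ω = 1)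
    (prim : Ω → M.Prim)
    (J : M.Ctrl → ℝ)
    (hJ : ∀ g, J g = ∑ ω, p ω * ∑ t : Fin T,
      M.l t (M.Xg g (prim ω) t) (M.Ug g (prim ω) t))
    (Jc : M.Coord → ℝ)
    (hJc : ∀ dc, Jc dc = ∑ ω, p ω * ∑ t : Fin T,
      M.l t (M.cX dc (prim ω) t) (M.cU dc (prim ω) t)) :
    (∀ g : M.Ctrl, ∃ dc : M.Coord,
      (∀ (xv : Fin T → M.𝒳) (uv : (t : Fin T) → ∀ i, M.𝒰 i),
        prOf p (fun ω => ∀ t : Fin T,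
            M.cX dc (prim ω) t = xv t ∧ M.cU dc (prim ω) t = uv t) =
          prOf p (fun ω => ∀ t : Fin T,
            M.Xg g (prim ω) t = xv t ∧ M.Ug g (prim ω) t = uv t)) ∧
        Jc dc = J g) ∧
    (∀ dc : M.Coord, ∃ g : M.Ctrl,
      (∀ (xv : Fin T → M.𝒳) (uv : (t : Fin T) → ∀ i, M.𝒰 i),
        prOf p (fun ω => ∀ t : Fin T,
            M.Xg g (prim ω) t = xv t ∧ M.Ug g (prim ω) t = uv t) =
          prOf p (fun ω => ∀ t : Fin T,
            M.cX dc (prim ω) t = xv t ∧ M.cU dc (prim ω) t = uv t)) ∧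
        J g = Jc dc) :=
  phs_coordinator_equivalence_general n M T Ω p prim J hJ Jc hJc
end

section
/- Alternative common information state: in the partial history sharing model, define Π^{new}ₜ(x, 𝐦) = P(Xₜ = x, 𝐌ₜ = 𝐦 | Cₜ). Then (i) Π^{new}ₜ = χₜ(Πₜ), where χₜ is marginalization over 𝐲: Π^{new}ₜ(x,𝐦) = Σ_𝐲 Πₜ(x,𝐲,𝐦); and (ii) Πₜ = ζₜ(Π^{new}ₜ), where ζₜ(π^{new})(x,𝐲,𝐦) = π^{new}(x,𝐦) · P(𝐘ₜ = 𝐲 | Xₜ = x), with P(𝐘ₜ = 𝐲 | Xₜ = x) = ∏ᵢ P(hᵢₜ(x, Wᵢₜ) = yⁱ) determined by the fixed observation-noise distributions and independent of the control strategy. Hence χₜ ∘ ζₜ = id and ζₜ ∘ χₜ(Πₜ) = Πₜ almost surely. -/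
/-!
Conditioning on `C = c` only divides by `P(C = c)`, so both claims are statements about joint
probabilities. Part (i) is the law of total probability over `𝐘`. For part (ii), since
`Yᵢ = hᵢ(x, Wᵢ)` on `{X = x}`, the event `{X = x, 𝐘 = y, 𝐌 = m, C = c}` is
`{X = x, 𝐌 = m, C = c} ∩ ⋂ᵢ {hᵢ(x, Wᵢ) = yᵢ}`; splitting it along the values `w` of the noise
vector, independence factors each piece as `P(X = x, 𝐌 = m, C = c) · ∏ᵢ P(Wᵢ = wᵢ)`, and the sum
over `w` of these products is the product over `i` of `P(hᵢ(x, Wᵢ) = yᵢ)`.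
-/

open Finset

section prOf

variable {Ω : Type} [Fintype Ω] (p : Ω → ℝ)

lemma prOf_congr {A B : Ω → Prop} (hAB : ∀ ω, A ω ↔ B ω) : prOf p A = prOf p B := by
  obtain rfl : A = B := funext fun ω => propext (hAB ω)
  rfl

lemma prOf_eq_sum_prOf_and_eq {α : Type} [Fintype α] (g : Ω → α) (A : Ω → Prop) :
    prOf p A = ∑ a, prOf p (fun ω => A ω ∧ g ω = a) := by
  classical
  unfold prOf
  rw [Finset.sum_comm]
  refine Finset.sum_congr rfl fun ω _ => ?_
  by_cases hA : A ω <;> simp [hA]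

lemma prOf_and_comp_eq_sum {α : Type} [Fintype α] (g : Ω → α) (A : Ω → Prop)
    (Q : α → Prop) [DecidablePred Q] :
    prOf p (fun ω => A ω ∧ Q (g ω)) =
      ∑ a, if Q a then prOf p (fun ω => A ω ∧ g ω = a) else 0 := by
  rw [prOf_eq_sum_prOf_and_eq p g]
  refine Finset.sum_congr rfl fun a _ => ?_
  split_ifs with hQ
  · refine prOf_congr p fun ω => ⟨fun h => ⟨h.1.1, h.2⟩, fun h => ⟨⟨h.1, ?_⟩, h.2⟩⟩
    rwa [h.2]
  · rw [prOf_congr p (B := fun _ => False) fun ω =>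
      ⟨fun ⟨⟨_, hq⟩, hg⟩ => hQ (hg ▸ hq), False.elim⟩]
    simp only [prOf, if_false, Finset.sum_const_zero]

lemma prOf_comp_eq_sum {α : Type} [Fintype α] (g : Ω → α) (Q : α → Prop) [DecidablePred Q] :
    prOf p (fun ω => Q (g ω)) = ∑ a, if Q a then prOf p (fun ω => g ω = a) else 0 := by
  simpa only [true_and] using prOf_and_comp_eq_sum p g (fun _ => True) Q

lemma prOf_and_forall_eq_mul_prod_of_indep {ι : Type} [Fintype ι] {𝒲 : ι → Type}
    [∀ i, Fintype (𝒲 i)] (E : Ω → Prop) (W : ∀ i, Ω → 𝒲 i) (S : ∀ i, 𝒲 i → Prop)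
    (hindep : ∀ w : ∀ i, 𝒲 i, prOf p (fun ω => E ω ∧ ∀ i, W i ω = w i) =
      prOf p E * ∏ i, prOf p (fun ω => W i ω = w i)) :
    prOf p (fun ω => E ω ∧ ∀ i, S i (W i ω)) = prOf p E * ∏ i, prOf p (fun ω => S i (W i ω)) := by
  classical
  have hfiber : ∀ w : ∀ i, 𝒲 i, prOf p (fun ω => E ω ∧ (fun i => W i ω) = w) =
      prOf p E * ∏ i, prOf p (fun ω => W i ω = w i) := fun w => by
    rw [← hindep w]
    exact prOf_congr p fun ω => by rw [funext_iff]
  calc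
    _ = ∑ w : ∀ i, 𝒲 i, if ∀ i, S i (w i) then
          prOf p (fun ω => E ω ∧ (fun i => W i ω) = w) else 0 :=
      prOf_and_comp_eq_sum p (fun ω i => W i ω) E (fun w => ∀ i, S i (w i))
    _ = prOf p E * ∑ w : ∀ i, 𝒲 i,
          ∏ i, if S i (w i) then prOf p (fun ω => W i ω = w i) else 0 := by
      simp only [hfiber, Fintype.prod_ite_zero, mul_ite, mul_zero, Finset.mul_sum]
    _ = prOf p E * ∏ i, prOf p (fun ω => S i (W i ω)) := by
      simp only [prOf_comp_eq_sum p (W _) (S _), Fintype.prod_sum]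

end prOf

theorem alternative_common_information_state_general
    (Ω 𝒳 𝒞 : Type) (n : ℕ) (𝒴 𝒲 ℳ : Fin n → Type)
    [Fintype Ω] [∀ i, Fintype (𝒴 i)] [∀ i, Fintype (𝒲 i)]
    (p : Ω → ℝ)
    (X : Ω → 𝒳) (W : ∀ i, Ω → 𝒲 i) (h : ∀ i, 𝒳 → 𝒲 i → 𝒴 i)
    (Y : ∀ i, Ω → 𝒴 i) (hY : ∀ i ω, Y i ω = h i (X ω) (W i ω))
    (Mem : Ω → ∀ i, ℳ i) (C : Ω → 𝒞)
    (hindep : ∀ (x : 𝒳) (m : ∀ i, ℳ i) (c : 𝒞) (w : ∀ i, 𝒲 i),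
      prOf p (fun ω => X ω = x ∧ Mem ω = m ∧ C ω = c ∧ ∀ i, W i ω = w i) =
        prOf p (fun ω => X ω = x ∧ Mem ω = m ∧ C ω = c) *
          ∏ i, prOf p (fun ω => W i ω = w i)) :
    ∀ c : 𝒞, 0 < prOf p (fun ω => C ω = c) →
      (∀ (x : 𝒳) (m : ∀ i, ℳ i),
        prOf p (fun ω => X ω = x ∧ Mem ω = m ∧ C ω = c) / prOf p (fun ω => C ω = c) =
          ∑ y : ∀ i, 𝒴 i,
            prOf p (fun ω => X ω = x ∧ (∀ i, Y i ω = y i) ∧ Mem ω = m ∧ C ω = c) /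
              prOf p (fun ω => C ω = c)) ∧
      (∀ (x : 𝒳) (y : ∀ i, 𝒴 i) (m : ∀ i, ℳ i),
        prOf p (fun ω => X ω = x ∧ (∀ i, Y i ω = y i) ∧ Mem ω = m ∧ C ω = c) /
            prOf p (fun ω => C ω = c) =
          (prOf p (fun ω => X ω = x ∧ Mem ω = m ∧ C ω = c) /
              prOf p (fun ω => C ω = c)) *
            ∏ i, prOf p (fun ω => h i x (W i ω) = y i)) := by
  intro c _
  refine ⟨fun x m => ?_, fun x y m => ?_⟩
  · rw [← Finset.sum_div, prOf_eq_sum_prOf_and_eq p (fun ω i => Y i ω)]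
    congr 1
    refine Finset.sum_congr rfl fun y _ => prOf_congr p fun ω => ?_
    rw [funext_iff (f := fun i => Y i ω)]
    tauto
  · have hevent : ∀ ω, (X ω = x ∧ (∀ i, Y i ω = y i) ∧ Mem ω = m ∧ C ω = c) ↔
        (X ω = x ∧ Mem ω = m ∧ C ω = c) ∧ ∀ i, h i x (W i ω) = y i := fun ω => by
      simp only [hY]
      constructor
      · rintro ⟨rfl, hy, hm, hc⟩
        exact ⟨⟨rfl, hm, hc⟩, hy⟩
      · rintro ⟨⟨rfl, hm, hc⟩, hy⟩
        exact ⟨rfl, hy, hm, hc⟩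
    rw [prOf_congr p hevent, div_mul_eq_mul_div,
      prOf_and_forall_eq_mul_prod_of_indep p _ W (fun i w => h i x w = y i)
        (by simpa only [and_assoc] using hindep x m c)]

/-- Lemma 2 / Theorem 4, alternative common information state:
with Yᵢ = hᵢ(X, Wᵢ) and the observation noises (W¹,…,Wⁿ) mutually independent and
independent of (X, 𝐌, C), the common information state Π = P(X,𝐘,𝐌 | C) and the
reduced state Π^new = P(X,𝐌 | C) determine each other: Π^new is the 𝐲-marginal of Π,
and Π(x,𝐲,𝐦) = Π^new(x,𝐦) · ∏ᵢ P(hᵢ(x,Wᵢ) = yᵢ), the latter factor being fixed by the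
observation-noise distributions (independent of the control strategy). -/
theorem alternative_common_information_state
    (Ω 𝒳 𝒞 : Type) (n : ℕ) (𝒴 𝒲 ℳ : Fin n → Type)
    [Fintype Ω] [Fintype 𝒳] [Fintype 𝒞] [∀ i, Fintype (𝒴 i)] [∀ i, Fintype (𝒲 i)]
    [∀ i, Fintype (ℳ i)]
    (p : Ω → ℝ) (hp : ∀ ω, 0 ≤ p ω) (hp1 : ∑ ω, p ω = 1)
    (X : Ω → 𝒳) (W : ∀ i, Ω → 𝒲 i) (h : ∀ i, 𝒳 → 𝒲 i → 𝒴 i)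
    (Y : ∀ i, Ω → 𝒴 i) (hY : ∀ i ω, Y i ω = h i (X ω) (W i ω))
    (Mem : Ω → ∀ i, ℳ i) (C : Ω → 𝒞)
    (hindep : ∀ (x : 𝒳) (m : ∀ i, ℳ i) (c : 𝒞) (w : ∀ i, 𝒲 i),
      prOf p (fun ω => X ω = x ∧ Mem ω = m ∧ C ω = c ∧ ∀ i, W i ω = w i) =
        prOf p (fun ω => X ω = x ∧ Mem ω = m ∧ C ω = c) *
          ∏ i, prOf p (fun ω => W i ω = w i)) :
    ∀ c : 𝒞, 0 < prOf p (fun ω => C ω = c) →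
      (∀ (x : 𝒳) (m : ∀ i, ℳ i),
        prOf p (fun ω => X ω = x ∧ Mem ω = m ∧ C ω = c) / prOf p (fun ω => C ω = c) =
          ∑ y : ∀ i, 𝒴 i,
            prOf p (fun ω => X ω = x ∧ (∀ i, Y i ω = y i) ∧ Mem ω = m ∧ C ω = c) /
              prOf p (fun ω => C ω = c)) ∧
      (∀ (x : 𝒳) (y : ∀ i, 𝒴 i) (m : ∀ i, ℳ i),
        prOf p (fun ω => X ω = x ∧ (∀ i, Y i ω = y i) ∧ Mem ω = m ∧ C ω = c) /
            prOf p (fun ω => C ω = c) =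
          (prOf p (fun ω => X ω = x ∧ Mem ω = m ∧ C ω = c) /
              prOf p (fun ω => C ω = c)) *
            ∏ i, prOf p (fun ω => h i x (W i ω) = y i)) :=
  alternative_common_information_state_general Ω 𝒳 𝒞 n 𝒴 𝒲 ℳ p X W h Y hY Mem C hindep
end
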